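/- In any swap equilibrium of any swap Schelling game (G,b,Λ), agents of different colors cannot both be segregated: it is impossible that some blue agent i and some red agent j satisfy f_i(σ) = 1 and f_j(σ) = 1. -/

import Mathlib

open Finset

namespace SwapSchelling

variable {V : Type*} [Fintype V] [DecidableEq V]

open scoped Classical in
/-- The closed neighborhood `N[v]` of a node `v` in `G`, as a `Finset`. -/
noncomputable def closedNbhd (G : SimpleGraph V) (v : V) : Finset V :=
  univ.filter (fun u => u = v ∨ G.Adj v u)

open scoped Classical in
/-- The degree `δ(v)` of a node `v` in `G`. -/
noncomputable def deg (G : SimpleGraph V) (v : V) : ℕ :=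
  (univ.filter (fun u => G.Adj v u)).card

/-- The maximum degree `Δ(G)`. -/
noncomputable def maxDeg (G : SimpleGraph V) : ℕ := univ.sup (deg G)

/-- The minimum degree `δ(G)`. -/
noncomputable def minDeg (G : SimpleGraph V) : ℕ := sInf (Set.range (deg G))

open scoped Classical in
/-- `frac G c v` is the fraction of nodes in the closed neighborhood of `v` that have
the same color as `v` (that is, `f_i(σ)` for the agent `i` occupying node `v`). -/
noncomputable def frac (G : SimpleGraph V) (c : V → Bool) (v : V) : ℝ :=
  (((closedNbhd G v).filter (fun u => c u = c v)).card : ℝ) / ((closedNbhd G v).card : ℝ)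

/-- The coloring obtained from `c` after the agents on nodes `v` and `w` swap positions. -/
def swapColor (c : V → Bool) (v w : V) : V → Bool := c ∘ Equiv.swap v w

/-- A single-peaked utility function `p` with peak at `Λ`: `p 0 = 0`, `p` is strictly
increasing on `[0,Λ]`, `p Λ = 1`, and `p x = p (Λ(1-x)/(1-Λ))` for `x ∈ [Λ,1]`. -/
structure IsSinglePeaked (p : ℝ → ℝ) (Λ : ℝ) : Prop where
  peak_mem : Λ ∈ Set.Ioo (0 : ℝ) 1
  map_zero : p 0 = 0
  strictMonoOn : StrictMonoOn p (Set.Icc 0 Λ)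
  map_peak : p Λ = 1
  symm : ∀ x ∈ Set.Icc Λ 1, p x = p (Λ * (1 - x) / (1 - Λ))

/-- A strategy profile: a 2-coloring of the nodes with exactly `b` blue (`true`) nodes. -/
def IsProfile (c : V → Bool) (b : ℕ) : Prop :=
  (univ.filter (fun v => c v = true)).card = b

/-- The structural data of a swap Schelling game `(G, b, Λ)` with utility function `p`:
`G` is connected, there are `b` blue agents with `1 ≤ b ≤ n/2`, and `p` is a
single-peaked utility function with peak `Λ`. -/
structure IsGame (G : SimpleGraph V) (b : ℕ) (Λ : ℝ) (p : ℝ → ℝ) : Prop where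
  connected : G.Connected
  one_le_b : 1 ≤ b
  b_le_half : 2 * b ≤ Fintype.card V
  singlePeaked : IsSinglePeaked p Λ

/-- The swap of the two (differently colored) agents occupying nodes `v` and `w`
is profitable: both agents strictly increase their utility. -/
def ProfitableSwap (G : SimpleGraph V) (p : ℝ → ℝ) (c : V → Bool) (v w : V) : Prop :=
  c v ≠ c w ∧
  p (frac G (swapColor c v w) w) > p (frac G c v) ∧
  p (frac G (swapColor c v w) v) > p (frac G c w)

/-- A swap equilibrium: no profitable swap exists. -/
def IsSwapEquilibrium (G : SimpleGraph V) (p : ℝ → ℝ) (c : V → Bool) : Prop :=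
  ∀ v w, ¬ ProfitableSwap G p c v w

open scoped Classical in
/-- The degree of integration: the number of non-segregated agents. -/
noncomputable def DoI (G : SimpleGraph V) (c : V → Bool) : ℕ :=
  (univ.filter (fun v => frac G c v ≠ 1)).card

open scoped Classical in
/-- The number of monochromatic edges of `G` under the coloring `c`. -/
noncomputable def Phi (G : SimpleGraph V) (c : V → Bool) : ℕ :=
  (G.edgeFinset.filter (fun e => ∀ u ∈ e, ∀ w ∈ e, c u = c w)).card

open scoped Classical in
/-- The number of edges of `G`. -/
noncomputable def numEdges (G : SimpleGraph V) : ℕ :=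
  (univ.filter (fun e : Sym2 V => e ∈ G.edgeSet)).card

/-- A finset of nodes is an independent set of `G`. -/
def IsIndepSet (G : SimpleGraph V) (s : Finset V) : Prop :=
  ∀ u ∈ s, ∀ w ∈ s, ¬ G.Adj u w

open scoped Classical in
/-- The independence number `α(G)`. -/
noncomputable def indepNum (G : SimpleGraph V) : ℕ :=
  univ.sup (fun s : Finset V => if IsIndepSet G s then s.card else 0)

open scoped Classical in
/-- The degree of `v` inside the subgraph of `G` induced by the node set `s`. -/
noncomputable def degOn (G : SimpleGraph V) (s : Finset V) (v : V) : ℕ :=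
  (s.filter (fun u => G.Adj v u)).card


/-!
Two segregated agents of different colors are not adjacent, so after swapping them each one
sees only itself in its own color: its fraction drops from `1` to `1 / |N[x]|`, which lies in
`(0, 1)` because a connected graph on at least two nodes has no isolated node. A single-peaked
utility vanishes at `1` and is positive on `(0, 1)`, so the swap is profitable for both.
-/

namespace IsSinglePeaked

variable {p : ℝ → ℝ} {Λ : ℝ}

theorem map_one (hp : IsSinglePeaked p Λ) : p 1 = 0 := by
  simpa [hp.map_zero] using hp.symm 1 ⟨hp.peak_mem.2.le, le_rfl⟩

theorem pos_of_mem_Ioo (hp : IsSinglePeaked p Λ) {x : ℝ} (hx : x ∈ Set.Ioo 0 1) : 0 < p x := by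
  obtain ⟨hΛ0, hΛ1⟩ := hp.peak_mem
  have pos_of_mem_Ioc : ∀ y ∈ Set.Ioc 0 Λ, 0 < p y := fun y hy => by
    simpa [hp.map_zero] using hp.strictMonoOn ⟨le_rfl, hΛ0.le⟩ ⟨hy.1.le, hy.2⟩ hy.1
  rcases le_or_gt x Λ with hxΛ | hΛx
  · exact pos_of_mem_Ioc x ⟨hx.1, hxΛ⟩
  · have h1Λ : 0 < 1 - Λ := sub_pos.2 hΛ1
    rw [hp.symm x ⟨hΛx.le, hx.2.le⟩]
    refine pos_of_mem_Ioc _ ⟨div_pos (mul_pos hΛ0 (sub_pos.2 hx.2)) h1Λ, ?_⟩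
    rw [div_le_iff₀ h1Λ]
    nlinarith

end IsSinglePeaked

variable {G : SimpleGraph V} {c : V → Bool} {u v w : V}

theorem mem_closedNbhd : u ∈ closedNbhd G v ↔ u = v ∨ G.Adj v u := by
  simp [closedNbhd]

theorem self_mem_closedNbhd (G : SimpleGraph V) (v : V) : v ∈ closedNbhd G v :=
  mem_closedNbhd.2 (Or.inl rfl)

theorem two_le_card_closedNbhd [Nontrivial V] (hG : G.Preconnected) (v : V) :
    2 ≤ (closedNbhd G v).card := by
  obtain ⟨u, hvu⟩ := hG.exists_adj_of_nontrivial v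
  exact one_lt_card.2 ⟨v, self_mem_closedNbhd G v, u, mem_closedNbhd.2 (Or.inr hvu), hvu.ne⟩

theorem inv_card_closedNbhd_mem_Ioo [Nontrivial V] (hG : G.Preconnected) (v : V) :
    ((closedNbhd G v).card : ℝ)⁻¹ ∈ Set.Ioo 0 1 := by
  have h2 : (2 : ℝ) ≤ (closedNbhd G v).card := by exact_mod_cast two_le_card_closedNbhd hG v
  exact ⟨by positivity, inv_lt_one_of_one_lt₀ (by linarith)⟩

theorem frac_eq_one_iff : frac G c v = 1 ↔ ∀ u ∈ closedNbhd G v, c u = c v := by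
  have hpos : (0 : ℝ) < (closedNbhd G v).card := by
    exact_mod_cast card_pos.2 ⟨v, self_mem_closedNbhd G v⟩
  rw [frac, div_eq_one_iff_eq hpos.ne', Nat.cast_inj, card_filter_eq_iff]

theorem not_adj_of_frac_eq_one (hw : frac G c w = 1) (hvw : c v ≠ c w) : ¬ G.Adj w v :=
  fun hwv => hvw (frac_eq_one_iff.1 hw v (mem_closedNbhd.2 (Or.inr hwv)))

theorem frac_swapColor_right (hw : frac G c w = 1) (hvw : c v ≠ c w) :
    frac G (swapColor c v w) w = ((closedNbhd G w).card : ℝ)⁻¹ := by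
  have hnadj := not_adj_of_frac_eq_one hw hvw
  have only_self : (closedNbhd G w).filter
      (fun u => swapColor c v w u = swapColor c v w w) = {w} := by
    ext u
    simp only [mem_filter, mem_singleton, swapColor, Function.comp_apply,
      Equiv.swap_apply_right]
    constructor
    · rintro ⟨hu, hcu⟩
      by_contra huw
      have hwu : G.Adj w u := (mem_closedNbhd.1 hu).resolve_left huw
      have huv : u ≠ v := fun huv => hnadj (huv ▸ hwu)
      rw [Equiv.swap_apply_of_ne_of_ne huv huw] at hcu
      exact hvw (hcu.symm.trans (frac_eq_one_iff.1 hw u hu))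
    · rintro rfl
      exact ⟨self_mem_closedNbhd G u, by rw [Equiv.swap_apply_right]⟩
  rw [frac, only_self, card_singleton, Nat.cast_one, one_div]

theorem frac_swapColor_left (hv : frac G c v = 1) (hvw : c v ≠ c w) :
    frac G (swapColor c v w) v = ((closedNbhd G v).card : ℝ)⁻¹ := by
  rw [swapColor, Equiv.swap_comm]
  exact frac_swapColor_right hv hvw.symm

theorem profitableSwap_of_frac_eq_one {p : ℝ → ℝ} {Λ : ℝ} (hG : G.Preconnected)
    (hp : IsSinglePeaked p Λ) (hv : frac G c v = 1) (hw : frac G c w = 1) (hvw : c v ≠ c w) :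
    ProfitableSwap G p c v w := by
  have : Nontrivial V := nontrivial_of_ne v w (fun h => hvw (congrArg c h))
  refine ⟨hvw, ?_, ?_⟩
  · rw [hv, hp.map_one, frac_swapColor_right hw hvw]
    exact hp.pos_of_mem_Ioo (inv_card_closedNbhd_mem_Ioo hG w)
  · rw [hw, hp.map_one, frac_swapColor_left hv hvw]
    exact hp.pos_of_mem_Ioo (inv_card_closedNbhd_mem_Ioo hG v)

theorem no_two_segregated_colors_in_equilibrium_general
    {V : Type*} [Fintype V] [DecidableEq V] (G : SimpleGraph V) (b : ℕ) (Λ : ℝ) (p : ℝ → ℝ)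
    (hgame : IsGame G b Λ p)
    (c : V → Bool) (hse : IsSwapEquilibrium G p c)
    (v w : V) (hvw : c v ≠ c w) :
    ¬ (frac G c v = 1 ∧ frac G c w = 1) := by
  rintro ⟨hv, hw⟩
  exact hse v w
    (profitableSwap_of_frac_eq_one hgame.connected.preconnected hgame.singlePeaked hv hw hvw)

/-- In any swap equilibrium, agents of different colors cannot both be
segregated. -/
theorem no_two_segregated_colors_in_equilibrium
    {V : Type*} [Fintype V] [DecidableEq V] (G : SimpleGraph V) (b : ℕ) (Λ : ℝ) (p : ℝ → ℝ)
    (hgame : IsGame G b Λ p)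
    (c : V → Bool) (hc : IsProfile c b) (hse : IsSwapEquilibrium G p c)
    (v w : V) (hvw : c v ≠ c w) :
    ¬ (frac G c v = 1 ∧ frac G c w = 1) :=
  no_two_segregated_colors_in_equilibrium_general G b Λ p hgame c hse v w hvw

end SwapSchelling
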